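/- Let m, k, t be positive integers. For x ∈ Fin m and a k×k complex matrix U, define the value-controlled gate C_x(U) on ℂ^{Fin m} ⊗ ℂ^{Fin k} as the block-diagonal matrix Σ_{y ≠ x} |y⟩⟨y| ⊗ I + |x⟩⟨x| ⊗ U. Suppose T is an invertible k×k complex matrix, D_0,…,D_{t−1} are diagonal k×k complex matrices, and set U_i = T · D_i · T⁻¹. Then for any values x_0,…,x_{t−1} ∈ Fin m: (i) the gates C_{x_i}(D_i) pairwise commute, and (ii) the product Π_{i=0}^{t−1} C_{x_i}(U_i) equals (I ⊗ T) · (Π_{i=0}^{t−1} C_{x_i}(D_i)) · (I ⊗ T⁻¹). -/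

import Mathlib

open scoped BigOperators Kronecker

/-! Conjugation by `1 ⊗ₖ T` fixes the blocks `|y⟩⟨y| ⊗ 1` and sends `|x⟩⟨x| ⊗ D` to
`|x⟩⟨x| ⊗ T D T⁻¹`, so each `C_x(T D T⁻¹)` is the conjugate of `C_x(D)`, and conjugation by a unit
commutes with products. The gates `C_x(D)` with `D` diagonal are diagonal, hence commute. -/

open Matrix

theorem Units.list_prod_map_conj {M : Type*} [Monoid M] (u : Mˣ) (l : List M) :
    (l.map fun a => (u : M) * a * ↑u⁻¹).prod = u * l.prod * ↑u⁻¹ :=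
  (List.smul_prod' (r := ConjAct.toConjAct u)).symm

namespace Matrix

variable {ι n R : Type*}

theorem isDiag_single_self [DecidableEq ι] [Zero R] (i : ι) (r : R) : (single i i r).IsDiag :=
  diagonal_single i r ▸ isDiag_diagonal _

theorem IsDiag.commute [Fintype n] [DecidableEq n] [CommSemiring R] {A B : Matrix n n R}
    (hA : A.IsDiag) (hB : B.IsDiag) : Commute A B :=
  hA.diagonal_diag ▸ hB.diagonal_diag ▸ commute_diagonal _ _

theorem one_kronecker_mul_kronecker_mul_one_kronecker [Fintype ι] [DecidableEq ι] [Fintype n]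
    [CommSemiring R] (S S' B : Matrix n n R) (A : Matrix ι ι R) :
    (1 ⊗ₖ S) * (A ⊗ₖ B) * (1 ⊗ₖ S') = A ⊗ₖ (S * B * S') := by
  rw [← mul_kronecker_mul, ← mul_kronecker_mul, one_mul, mul_one]

def controlledGate [Fintype ι] [DecidableEq ι] [DecidableEq n] [Semiring R] (x : ι)
    (U : Matrix n n R) : Matrix (ι × n) (ι × n) R :=
  (∑ y ∈ Finset.univ.erase x, single y y (1 : R) ⊗ₖ (1 : Matrix n n R)) + single x x 1 ⊗ₖ U

theorem IsDiag.controlledGate [Fintype ι] [DecidableEq ι] [DecidableEq n] [Semiring R]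
    {D : Matrix n n R} (hD : D.IsDiag) (x : ι) : (controlledGate x D).IsDiag := by
  refine .add ?_ ((isDiag_single_self x 1).kronecker hD)
  intro i j hij
  rw [sum_apply]
  exact Finset.sum_eq_zero fun y _ => (isDiag_single_self y 1).kronecker isDiag_one hij

theorem one_kronecker_mul_controlledGate_mul_one_kronecker [Fintype ι] [DecidableEq ι]
    [Fintype n] [DecidableEq n] [CommSemiring R] {S S' : Matrix n n R} (hS : S * S' = 1)
    (x : ι) (D : Matrix n n R) :
    (1 ⊗ₖ S) * controlledGate x D * (1 ⊗ₖ S') = controlledGate x (S * D * S') := by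
  simp only [controlledGate, mul_add, add_mul, Finset.mul_sum, Finset.sum_mul,
    one_kronecker_mul_kronecker_mul_one_kronecker, mul_one, hS]

end Matrix

theorem controlled_commuting_gates_parallelize_general (m k t : ℕ)
    (C : Fin m → Matrix (Fin k) (Fin k) ℂ → Matrix (Fin m × Fin k) (Fin m × Fin k) ℂ)
    (hC : ∀ (x : Fin m) (U : Matrix (Fin k) (Fin k) ℂ),
      C x U = (∑ y ∈ Finset.univ.erase x,
          Matrix.single y y (1 : ℂ) ⊗ₖ (1 : Matrix (Fin k) (Fin k) ℂ))
        + Matrix.single x x (1 : ℂ) ⊗ₖ U)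
    (T : Matrix (Fin k) (Fin k) ℂ) (hT : IsUnit T)
    (D : Fin t → Matrix (Fin k) (Fin k) ℂ) (hD : ∀ i, (D i).IsDiag)
    (U : Fin t → Matrix (Fin k) (Fin k) ℂ) (hU : ∀ i, U i = T * D i * T⁻¹)
    (x : Fin t → Fin m) :
    (∀ i j : Fin t, C (x i) (D i) * C (x j) (D j) = C (x j) (D j) * C (x i) (D i)) ∧
    (List.ofFn fun i : Fin t => C (x i) (U i)).prod
      = ((1 : Matrix (Fin m) (Fin m) ℂ) ⊗ₖ T)
        * (List.ofFn fun i : Fin t => C (x i) (D i)).prod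
        * ((1 : Matrix (Fin m) (Fin m) ℂ) ⊗ₖ T⁻¹) := by
  obtain rfl : C = controlledGate := funext fun x => funext (hC x)
  refine ⟨fun i j => (((hD i).controlledGate _).commute ((hD j).controlledGate _)).eq, ?_⟩
  obtain ⟨S, hS⟩ : IsUnit ((1 : Matrix (Fin m) (Fin m) ℂ) ⊗ₖ T) := isUnit_one.kronecker hT
  have hS_inv : ↑S⁻¹ = (1 : Matrix (Fin m) (Fin m) ℂ) ⊗ₖ T⁻¹ := by
    rw [coe_units_inv, hS, inv_kronecker, inv_one]
  have hTT : T * T⁻¹ = 1 := mul_nonsing_inv T ((isUnit_iff_isUnit_det T).mp hT)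
  simp_rw [hU, ← one_kronecker_mul_controlledGate_mul_one_kronecker hTT, ← hS, ← hS_inv]
  rw [← Units.list_prod_map_conj, List.map_ofFn]
  rfl

/-- Parallelization of multi-controlled pairwise commuting gates (Høyer–Špalek):
if `U_i = T·D_i·T⁻¹` with the `D_i` diagonal, then the value-controlled gates
`C_{x_i}(D_i)` pairwise commute and
`∏ᵢ C_{x_i}(U_i) = (I ⊗ T)·(∏ᵢ C_{x_i}(D_i))·(I ⊗ T⁻¹)`. -/
theorem controlled_commuting_gates_parallelize (m k t : ℕ)
    (hm : 0 < m) (hk : 0 < k) (ht : 0 < t)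
    (C : Fin m → Matrix (Fin k) (Fin k) ℂ → Matrix (Fin m × Fin k) (Fin m × Fin k) ℂ)
    (hC : ∀ (x : Fin m) (U : Matrix (Fin k) (Fin k) ℂ),
      C x U = (∑ y ∈ Finset.univ.erase x,
          Matrix.single y y (1 : ℂ) ⊗ₖ (1 : Matrix (Fin k) (Fin k) ℂ))
        + Matrix.single x x (1 : ℂ) ⊗ₖ U)
    (T : Matrix (Fin k) (Fin k) ℂ) (hT : IsUnit T)
    (D : Fin t → Matrix (Fin k) (Fin k) ℂ) (hD : ∀ i, (D i).IsDiag)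
    (U : Fin t → Matrix (Fin k) (Fin k) ℂ) (hU : ∀ i, U i = T * D i * T⁻¹)
    (x : Fin t → Fin m) :
    (∀ i j : Fin t, C (x i) (D i) * C (x j) (D j) = C (x j) (D j) * C (x i) (D i)) ∧
    (List.ofFn fun i : Fin t => C (x i) (U i)).prod
      = ((1 : Matrix (Fin m) (Fin m) ℂ) ⊗ₖ T)
        * (List.ofFn fun i : Fin t => C (x i) (D i)).prod
        * ((1 : Matrix (Fin m) (Fin m) ℂ) ⊗ₖ T⁻¹) :=
  controlled_commuting_gates_parallelize_general m k t C hC T hT D hD U hU x
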